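/- Let p ∈ (0,∞) and (M,d,+) be a complete metric semigroup. Then the bivariate Wiener bounded p-variation space (WBV_p(I×I,M), ρ_p), with ρ_p(f,g) = d(f(0,0),g(0,0)) + V_p(f,g), is a complete metric space. -/

import Mathlib

open Finset

/-- `t` represents a partition `0 = t 0 < t 1 < ⋯ < t n = 1` of `[0,1]`. -/
def IsPartition (n : ℕ) (t : ℕ → ℝ) : Prop :=
  0 < n ∧ t 0 = 0 ∧ t n = 1 ∧ ∀ i < n, t i < t (i + 1)

/-- `normW p x = x ^ (1/p)` when `p ≥ 1`, and `x` itself when `p < 1`,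
matching the two cases in the definition of the Wiener `p`-variation. -/
noncomputable def normW (p x : ℝ) : ℝ := if 1 ≤ p then x ^ (1 / p) else x

variable {M : Type*} [MetricSpace M] [AddCommSemigroup M]

/-- Marginal partition sum `Σ_i d^p(f(t_i,0), f(t_{i-1},0))`. -/
noncomputable def wSum1 (p : ℝ) (f : ℝ → ℝ → M) (n : ℕ) (t : ℕ → ℝ) : ℝ :=
  ∑ i ∈ range n, dist (f (t (i + 1)) 0) (f (t i) 0) ^ p

/-- Marginal partition sum `Σ_j d^p(f(0,s_j), f(0,s_{j-1}))`. -/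
noncomputable def wSum2 (p : ℝ) (f : ℝ → ℝ → M) (m : ℕ) (s : ℕ → ℝ) : ℝ :=
  ∑ j ∈ range m, dist (f 0 (s (j + 1))) (f 0 (s j)) ^ p

/-- Double partition sum of the mixed differences. -/
noncomputable def wSum12 (p : ℝ) (f : ℝ → ℝ → M) (n : ℕ) (t : ℕ → ℝ)
    (m : ℕ) (s : ℕ → ℝ) : ℝ :=
  ∑ j ∈ range m, ∑ i ∈ range n,
    dist (f (t (i + 1)) (s (j + 1)) + f (t i) (s j))
         (f (t (i + 1)) (s j) + f (t i) (s (j + 1))) ^ p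

/-- Joint marginal sum for two functions. -/
noncomputable def wSum1J (p : ℝ) (f g : ℝ → ℝ → M) (n : ℕ) (t : ℕ → ℝ) : ℝ :=
  ∑ i ∈ range n,
    dist (f (t (i + 1)) 0 + g (t i) 0) (f (t i) 0 + g (t (i + 1)) 0) ^ p

noncomputable def wSum2J (p : ℝ) (f g : ℝ → ℝ → M) (m : ℕ) (s : ℕ → ℝ) : ℝ :=
  ∑ j ∈ range m,
    dist (f 0 (s (j + 1)) + g 0 (s j)) (f 0 (s j) + g 0 (s (j + 1))) ^ p

noncomputable def wSum12J (p : ℝ) (f g : ℝ → ℝ → M) (n : ℕ) (t : ℕ → ℝ)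
    (m : ℕ) (s : ℕ → ℝ) : ℝ :=
  ∑ j ∈ range m, ∑ i ∈ range n,
    dist (f (t (i + 1)) (s (j + 1)) + f (t i) (s j)
            + g (t (i + 1)) (s j) + g (t i) (s (j + 1)))
         (g (t (i + 1)) (s (j + 1)) + g (t i) (s j)
            + f (t (i + 1)) (s j) + f (t i) (s (j + 1))) ^ p

/-- The set of partition values of `V_p(f(·,0), Π)`. -/
def wSet1 (p : ℝ) (f : ℝ → ℝ → M) : Set ℝ :=
  {x | ∃ n t, IsPartition n t ∧ x = normW p (wSum1 p f n t)}

def wSet2 (p : ℝ) (f : ℝ → ℝ → M) : Set ℝ :=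
  {x | ∃ m s, IsPartition m s ∧ x = normW p (wSum2 p f m s)}

def wSet12 (p : ℝ) (f : ℝ → ℝ → M) : Set ℝ :=
  {x | ∃ n t m s, IsPartition n t ∧ IsPartition m s ∧ x = normW p (wSum12 p f n t m s)}

/-- Total Wiener `p`-variation `V_p(f) = V_p(f(·,0)) + V_p(f(0,·)) + V_{p,2}(f)`. -/
noncomputable def Vp (p : ℝ) (f : ℝ → ℝ → M) : ℝ :=
  sSup (wSet1 p f) + sSup (wSet2 p f) + sSup (wSet12 p f)

/-- `f` has bounded Wiener `p`-variation on `I × I`. -/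
def MemWBV (p : ℝ) (f : ℝ → ℝ → M) : Prop :=
  BddAbove (wSet1 p f) ∧ BddAbove (wSet2 p f) ∧ BddAbove (wSet12 p f)

/-- The joint variation of `f, g` over a fixed pair of partitions,
`V_p(f,g,Π×Π*)`. -/
noncomputable def VpPart (p : ℝ) (f g : ℝ → ℝ → M) (n : ℕ) (t : ℕ → ℝ)
    (m : ℕ) (s : ℕ → ℝ) : ℝ :=
  normW p (wSum1J p f g n t) + normW p (wSum2J p f g m s) + normW p (wSum12J p f g n t m s)

def wSetJ (p : ℝ) (f g : ℝ → ℝ → M) : Set ℝ :=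
  {x | ∃ n t m s, IsPartition n t ∧ IsPartition m s ∧ x = VpPart p f g n t m s}

/-- The joint Wiener `p`-variation `V_p(f,g)`. -/
noncomputable def VpJ (p : ℝ) (f g : ℝ → ℝ → M) : ℝ := sSup (wSetJ p f g)

/-- The metric `ρ_p(f,g) = d(f(0,0), g(0,0)) + V_p(f,g)` on `WBV_p(I×I, M)`. -/
noncomputable def rhoP (p : ℝ) (f g : ℝ → ℝ → M) : ℝ :=
  dist (f 0 0) (g 0 0) + VpJ p f g

/-!
The joint distance `d(x + y', y + x')` measures how far apart the formal differences `x - y`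
and `x' - y'` are. Translation invariance gives it a triangle inequality and compares it with
the single distances `d(x, y)` and `d(x', y')`. Summing `p`-th powers over a partition and
applying Minkowski's inequality (`p ≥ 1`) or the subadditivity of `r ↦ r ^ p` (`p < 1`)
carries these inequalities over to `V_p(f, g)`, which gives the metric axioms.

A partition through a given point shows that every single increment, and hence
`d(f(a,b), g(a,b))`, is controlled by `ρ_p(f, g)`; so a `ρ_p`-Cauchy sequence converges pointwise
on the square. For fixed partitions the partition sums depend continuously on finitely many
values, so the Cauchy bound `ρ_p(F u, F v) < ε` passes to the pointwise limit `f`. This shows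
both `f ∈ WBV_p` and `ρ_p(F u, f) → 0`.
-/

open Filter Topology Function

section Semigroup

variable {M : Type*} [PseudoMetricSpace M] [AddCommSemigroup M]

/-- `d(x - y, x' - y')` for formal differences in a semigroup, written without subtraction. -/
def jointDist (x y x' y' : M) : ℝ := dist (x + y') (y + x')

theorem jointDist_comm (x y x' y' : M) : jointDist x y x' y' = jointDist x' y' x y := by
  rw [jointDist, jointDist, dist_comm, add_comm y, add_comm x]

theorem jointDist_transpose (x y x' y' : M) : jointDist x y x' y' = jointDist x x' y y' := by
  rw [jointDist, jointDist, add_comm y]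

theorem jointDist_self (x y : M) : jointDist x y x y = 0 := by
  rw [jointDist, add_comm y, dist_self]

theorem dist_add_left_of_invariant (hd : ∀ u v w : M, dist (u + w) (v + w) = dist u v)
    (a b c : M) : dist (c + a) (c + b) = dist a b := by
  rw [add_comm c, add_comm c, hd]

theorem dist_add_add_le_of_invariant (hd : ∀ u v w : M, dist (u + w) (v + w) = dist u v)
    (a a' b b' : M) : dist (a + b) (a' + b') ≤ dist a a' + dist b b' :=
  calc dist (a + b) (a' + b') ≤ dist (a + b) (a' + b) + dist (a' + b) (a' + b') :=
        dist_triangle _ _ _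
    _ = dist a a' + dist b b' := by rw [hd, dist_add_left_of_invariant hd]

theorem continuousAdd_of_invariant (hd : ∀ u v w : M, dist (u + w) (v + w) = dist u v) :
    ContinuousAdd M :=
  ⟨(LipschitzWith.of_dist_le_mul (K := 2) fun q r => by
    rw [Prod.dist_eq]
    push_cast
    linarith [dist_add_add_le_of_invariant hd q.1 r.1 q.2 r.2,
      le_max_left (dist q.1 r.1) (dist q.2 r.2), le_max_right (dist q.1 r.1) (dist q.2 r.2)]
    ).continuous⟩

theorem dist_le_jointDist_add (hd : ∀ u v w : M, dist (u + w) (v + w) = dist u v)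
    (x y x' y' : M) : dist x y ≤ jointDist x y x' y' + dist x' y' :=
  calc dist x y = dist (x + y') (y + y') := (hd x y y').symm
    _ ≤ dist (x + y') (y + x') + dist (y + x') (y + y') := dist_triangle _ _ _
    _ = jointDist x y x' y' + dist x' y' := by rw [jointDist, dist_add_left_of_invariant hd]

theorem jointDist_le (hd : ∀ u v w : M, dist (u + w) (v + w) = dist u v)
    (x y x' y' : M) : jointDist x y x' y' ≤ dist x y + dist x' y' := by
  rw [dist_comm x']
  exact dist_add_add_le_of_invariant hd x y y' x'

theorem jointDist_triangle (hd : ∀ u v w : M, dist (u + w) (v + w) = dist u v)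
    (x y x' y' x'' y'' : M) :
    jointDist x y x'' y'' ≤ jointDist x y x' y' + jointDist x' y' x'' y'' := by
  have e₁ : x + y'' + (x' + y') = x + y' + (x' + y'') := by ac_rfl
  have e₂ : y + x'' + (x' + y') = y + x' + (y' + x'') := by ac_rfl
  calc jointDist x y x'' y'' = dist (x + y' + (x' + y'')) (y + x' + (y' + x'')) := by
        rw [jointDist, ← hd _ _ (x' + y'), e₁, e₂]
    _ ≤ dist (x + y' + (x' + y'')) (y + x' + (x' + y'')) +
        dist (y + x' + (x' + y'')) (y + x' + (y' + x'')) := dist_triangle _ _ _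
    _ = jointDist x y x' y' + jointDist x' y' x'' y'' := by
        rw [hd, dist_add_left_of_invariant hd]; rfl

end Semigroup

theorem cauchySeq_of_dist_le_of_tendsto {X : Type*} [PseudoMetricSpace X] {x : ℕ → X}
    {r : ℕ → ℕ → ℝ} {ω : ℝ → ℝ} (hω : Tendsto ω (𝓝 0) (𝓝 0)) (hr₀ : ∀ u v, 0 ≤ r u v)
    (hr : ∀ ε > 0, ∃ N, ∀ u ≥ N, ∀ v ≥ N, r u v < ε)
    (hx : ∀ u v, dist (x u) (x v) ≤ ω (r u v)) : CauchySeq x := by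
  refine Metric.cauchySeq_iff.2 fun ε hε => ?_
  obtain ⟨δ, hδ, hωδ⟩ := Metric.tendsto_nhds_nhds.1 hω ε hε
  obtain ⟨N, hN⟩ := hr δ hδ
  refine ⟨N, fun u hu v hv => (hx u v).trans_lt ?_⟩
  have hr_lt : dist (r u v) 0 < δ := by
    rw [Real.dist_0_eq_abs, abs_of_nonneg (hr₀ u v)]
    exact hN u hu v hv
  exact (le_abs_self _).trans_lt (by simpa only [Real.dist_0_eq_abs] using hωδ hr_lt)

section PowerSums

variable {p : ℝ}

theorem normW_nonneg {x : ℝ} (hx : 0 ≤ x) : 0 ≤ normW p x := by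
  unfold normW; split_ifs
  exacts [Real.rpow_nonneg hx _, hx]

theorem normW_zero : normW p 0 = 0 := by
  unfold normW; split_ifs
  exacts [Real.zero_rpow (by positivity), rfl]

theorem normW_mono {x y : ℝ} (hx : 0 ≤ x) (hxy : x ≤ y) : normW p x ≤ normW p y := by
  unfold normW; split_ifs
  exacts [Real.rpow_le_rpow hx hxy (by positivity), hxy]

theorem continuous_normW (p : ℝ) : Continuous (normW p) := by
  unfold normW; split_ifs
  exacts [Real.continuous_rpow_const (by positivity), continuous_id]

theorem normW_sum_rpow_le {ι : Type*} (hp : 0 ≤ p) {S : Finset ι} {a b c : ι → ℝ}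
    (ha : ∀ i, 0 ≤ a i) (hb : ∀ i, 0 ≤ b i) (hc : ∀ i, 0 ≤ c i)
    (h : ∀ i ∈ S, a i ≤ b i + c i) :
    normW p (∑ i ∈ S, a i ^ p) ≤ normW p (∑ i ∈ S, b i ^ p) + normW p (∑ i ∈ S, c i ^ p) := by
  have hsum : ∑ i ∈ S, a i ^ p ≤ ∑ i ∈ S, (b i + c i) ^ p :=
    sum_le_sum fun i hi => Real.rpow_le_rpow (ha i) (h i hi) hp
  unfold normW; split_ifs with h1
  · calc (∑ i ∈ S, a i ^ p) ^ (1 / p) ≤ (∑ i ∈ S, (b i + c i) ^ p) ^ (1 / p) :=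
          Real.rpow_le_rpow (sum_nonneg fun i _ => Real.rpow_nonneg (ha i) _) hsum
            (by positivity)
      _ ≤ _ := Real.Lp_add_le_of_nonneg S h1 (fun i _ => hb i) (fun i _ => hc i)
  · calc ∑ i ∈ S, a i ^ p ≤ ∑ i ∈ S, (b i + c i) ^ p := hsum
      _ ≤ ∑ i ∈ S, (b i ^ p + c i ^ p) :=
          sum_le_sum fun i _ => Real.rpow_add_le_add_rpow (hb i) (hc i) hp (not_le.1 h1).le
      _ = _ := sum_add_distrib

theorem normW_sum_sum_rpow_le {ι κ : Type*} (hp : 0 ≤ p) {S : Finset ι} {T : Finset κ}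
    {a b c : ι → κ → ℝ} (ha : ∀ i j, 0 ≤ a i j) (hb : ∀ i j, 0 ≤ b i j) (hc : ∀ i j, 0 ≤ c i j)
    (h : ∀ i ∈ S, ∀ j ∈ T, a i j ≤ b i j + c i j) :
    normW p (∑ i ∈ S, ∑ j ∈ T, a i j ^ p) ≤
      normW p (∑ i ∈ S, ∑ j ∈ T, b i j ^ p) + normW p (∑ i ∈ S, ∑ j ∈ T, c i j ^ p) := by
  have := normW_sum_rpow_le hp (S := S ×ˢ T) (fun q => ha q.1 q.2) (fun q => hb q.1 q.2)
    (fun q => hc q.1 q.2) fun q hq => h _ (mem_product.1 hq).1 _ (mem_product.1 hq).2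
  simpa only [sum_product] using this

/-- The largest `x ≥ 0` with `normW p (x ^ p) ≤ V`: a single increment of size `x` contributes
`normW p (x ^ p)` to a variation. -/
noncomputable def maxIncr (p V : ℝ) : ℝ := if 1 ≤ p then V else V ^ (1 / p)

theorem maxIncr_nonneg {V : ℝ} (hV : 0 ≤ V) : 0 ≤ maxIncr p V := by
  unfold maxIncr; split_ifs
  exacts [hV, Real.rpow_nonneg hV _]

theorem maxIncr_zero (hp : 0 < p) : maxIncr p 0 = 0 := by
  unfold maxIncr; split_ifs
  exacts [rfl, Real.zero_rpow (by positivity)]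

theorem maxIncr_mono (hp : 0 < p) {V W : ℝ} (hV : 0 ≤ V) (hVW : V ≤ W) :
    maxIncr p V ≤ maxIncr p W := by
  unfold maxIncr; split_ifs
  exacts [hVW, Real.rpow_le_rpow hV hVW (by positivity)]

theorem continuous_maxIncr (hp : 0 < p) : Continuous (maxIncr p) := by
  unfold maxIncr; split_ifs
  exacts [continuous_id, Real.continuous_rpow_const (by positivity)]

theorem le_maxIncr (hp : 0 < p) {x V : ℝ} (hx : 0 ≤ x) (h : normW p (x ^ p) ≤ V) :
    x ≤ maxIncr p V := by
  have hx' : (x ^ p) ^ (1 / p) = x := by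
    rw [← Real.rpow_mul hx, mul_one_div_cancel hp.ne', Real.rpow_one]
  unfold normW at h; unfold maxIncr; split_ifs at h ⊢
  · exact hx'.symm.le.trans h
  · exact hx'.symm.le.trans (Real.rpow_le_rpow (by positivity) h (by positivity))

end PowerSums

section Partitions

theorem IsPartition.mem_Icc {n : ℕ} {t : ℕ → ℝ} (h : IsPartition n t) {i : ℕ} (hi : i ≤ n) :
    t i ∈ Set.Icc (0 : ℝ) 1 := by
  have hmono : MonotoneOn t (Set.Iic n) := (strictMonoOn_Iic_of_lt_succ h.2.2.2).monotoneOn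
  refine ⟨?_, ?_⟩
  · simpa [h.2.1] using hmono (Nat.zero_le n) hi (Nat.zero_le i)
  · simpa [h.2.2.1] using hmono (Set.mem_Iic.2 hi) (Set.mem_Iic.2 le_rfl) hi

theorem isPartition_one : IsPartition 1 (fun i => (i : ℝ)) :=
  ⟨one_pos, by norm_num, by norm_num, fun i _ => by push_cast; linarith⟩

theorem exists_isPartition_one_eq {a : ℝ} (h0 : 0 < a) (h1 : a ≤ 1) :
    ∃ n t, IsPartition n t ∧ t 1 = a := by
  rcases h1.lt_or_eq with h1 | rfl
  · refine ⟨2, fun i => if i = 0 then 0 else if i = 1 then a else 1,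
      ⟨two_pos, rfl, rfl, fun i hi => ?_⟩, rfl⟩
    interval_cases i <;> simpa
  · exact ⟨1, _, isPartition_one, by norm_num⟩

end Partitions

section JointVariation

variable {p : ℝ}

theorem wSum2J_eq_wSum1J_swap (f g : ℝ → ℝ → M) (m : ℕ) (s : ℕ → ℝ) :
    wSum2J p f g m s = wSum1J p (swap f) (swap g) m s := rfl

theorem wSum12J_eq_sum_jointDist (f g : ℝ → ℝ → M) (n : ℕ) (t : ℕ → ℝ) (m : ℕ)
    (s : ℕ → ℝ) :
    wSum12J p f g n t m s = ∑ j ∈ range m, ∑ i ∈ range n,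
      jointDist (f (t (i + 1)) (s (j + 1)) + f (t i) (s j))
        (f (t (i + 1)) (s j) + f (t i) (s (j + 1)))
        (g (t (i + 1)) (s (j + 1)) + g (t i) (s j))
        (g (t (i + 1)) (s j) + g (t i) (s (j + 1))) ^ p := by
  unfold wSum12J jointDist
  refine sum_congr rfl fun j _ => sum_congr rfl fun i _ => ?_
  congr 2 <;> ac_rfl

theorem normW_wSum1J_triangle (hd : ∀ u v w : M, dist (u + w) (v + w) = dist u v) (hp : 0 ≤ p)
    (f g h : ℝ → ℝ → M) (n : ℕ) (t : ℕ → ℝ) :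
    normW p (wSum1J p f h n t) ≤ normW p (wSum1J p f g n t) + normW p (wSum1J p g h n t) :=
  normW_sum_rpow_le hp (fun _ => dist_nonneg) (fun _ => dist_nonneg) (fun _ => dist_nonneg)
    fun _ _ => jointDist_triangle hd _ _ _ _ _ _

theorem normW_wSum12J_triangle (hd : ∀ u v w : M, dist (u + w) (v + w) = dist u v) (hp : 0 ≤ p)
    (f g h : ℝ → ℝ → M) (n : ℕ) (t : ℕ → ℝ) (m : ℕ) (s : ℕ → ℝ) :
    normW p (wSum12J p f h n t m s) ≤
      normW p (wSum12J p f g n t m s) + normW p (wSum12J p g h n t m s) := by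
  simp only [wSum12J_eq_sum_jointDist]
  exact normW_sum_sum_rpow_le hp (fun _ _ => dist_nonneg) (fun _ _ => dist_nonneg)
    (fun _ _ => dist_nonneg) fun _ _ _ _ => jointDist_triangle hd _ _ _ _ _ _

theorem normW_wSum1J_le (hd : ∀ u v w : M, dist (u + w) (v + w) = dist u v) (hp : 0 ≤ p)
    (f g : ℝ → ℝ → M) (n : ℕ) (t : ℕ → ℝ) :
    normW p (wSum1J p f g n t) ≤ normW p (wSum1 p f n t) + normW p (wSum1 p g n t) :=
  normW_sum_rpow_le hp (fun _ => dist_nonneg) (fun _ => dist_nonneg) (fun _ => dist_nonneg)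
    fun _ _ => jointDist_le hd _ _ _ _

theorem normW_wSum12J_le (hd : ∀ u v w : M, dist (u + w) (v + w) = dist u v) (hp : 0 ≤ p)
    (f g : ℝ → ℝ → M) (n : ℕ) (t : ℕ → ℝ) (m : ℕ) (s : ℕ → ℝ) :
    normW p (wSum12J p f g n t m s) ≤
      normW p (wSum12 p f n t m s) + normW p (wSum12 p g n t m s) := by
  rw [wSum12J_eq_sum_jointDist]
  exact normW_sum_sum_rpow_le hp (fun _ _ => dist_nonneg) (fun _ _ => dist_nonneg)
    (fun _ _ => dist_nonneg) fun _ _ _ _ => jointDist_le hd _ _ _ _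

theorem normW_wSum1_le (hd : ∀ u v w : M, dist (u + w) (v + w) = dist u v) (hp : 0 ≤ p)
    (f g : ℝ → ℝ → M) (n : ℕ) (t : ℕ → ℝ) :
    normW p (wSum1 p f n t) ≤ normW p (wSum1J p f g n t) + normW p (wSum1 p g n t) :=
  normW_sum_rpow_le hp (fun _ => dist_nonneg) (fun _ => dist_nonneg) (fun _ => dist_nonneg)
    fun _ _ => dist_le_jointDist_add hd _ _ _ _

theorem normW_wSum12_le (hd : ∀ u v w : M, dist (u + w) (v + w) = dist u v) (hp : 0 ≤ p)
    (f g : ℝ → ℝ → M) (n : ℕ) (t : ℕ → ℝ) (m : ℕ) (s : ℕ → ℝ) :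
    normW p (wSum12 p f n t m s) ≤
      normW p (wSum12J p f g n t m s) + normW p (wSum12 p g n t m s) := by
  rw [wSum12J_eq_sum_jointDist]
  exact normW_sum_sum_rpow_le hp (fun _ _ => dist_nonneg) (fun _ _ => dist_nonneg)
    (fun _ _ => dist_nonneg) fun _ _ _ _ => dist_le_jointDist_add hd _ _ _ _

end JointVariation

section JointVariationSup

variable {p : ℝ} {f g h : ℝ → ℝ → M} {n m : ℕ} {t s : ℕ → ℝ}

theorem wSum1J_nonneg (p : ℝ) (f g : ℝ → ℝ → M) (n : ℕ) (t : ℕ → ℝ) :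
    0 ≤ wSum1J p f g n t :=
  sum_nonneg fun _ _ => by positivity

theorem wSum12J_nonneg (p : ℝ) (f g : ℝ → ℝ → M) (n : ℕ) (t : ℕ → ℝ) (m : ℕ) (s : ℕ → ℝ) :
    0 ≤ wSum12J p f g n t m s :=
  sum_nonneg fun _ _ => sum_nonneg fun _ _ => by positivity

theorem VpPart_nonneg (p : ℝ) (f g : ℝ → ℝ → M) (n : ℕ) (t : ℕ → ℝ) (m : ℕ) (s : ℕ → ℝ) :
    0 ≤ VpPart p f g n t m s :=
  add_nonneg (add_nonneg (normW_nonneg (wSum1J_nonneg p f g n t))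
    (normW_nonneg (wSum1J_nonneg p (swap f) (swap g) m s)))
    (normW_nonneg (wSum12J_nonneg p f g n t m s))

theorem VpPart_comm (f g : ℝ → ℝ → M) (n : ℕ) (t : ℕ → ℝ) (m : ℕ) (s : ℕ → ℝ) :
    VpPart p f g n t m s = VpPart p g f n t m s := by
  simp only [VpPart, wSum1J, wSum2J, wSum12J_eq_sum_jointDist, ← jointDist.eq_def,
    jointDist_comm _ _ (g _ _), jointDist_comm _ _ (g _ _ + g _ _)]

theorem VpPart_self (hp : 0 < p) (f : ℝ → ℝ → M) (n : ℕ) (t : ℕ → ℝ) (m : ℕ) (s : ℕ → ℝ) :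
    VpPart p f f n t m s = 0 := by
  simp [VpPart, wSum1J, wSum2J, wSum12J_eq_sum_jointDist, ← jointDist.eq_def, jointDist_self,
    hp.ne', normW_zero]

theorem VpPart_triangle (hd : ∀ u v w : M, dist (u + w) (v + w) = dist u v) (hp : 0 ≤ p)
    (f g h : ℝ → ℝ → M) (n : ℕ) (t : ℕ → ℝ) (m : ℕ) (s : ℕ → ℝ) :
    VpPart p f h n t m s ≤ VpPart p f g n t m s + VpPart p g h n t m s := by
  have h₁ := normW_wSum1J_triangle hd hp f g h n t
  have h₂ := normW_wSum1J_triangle hd hp (swap f) (swap g) (swap h) m s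
  have h₁₂ := normW_wSum12J_triangle hd hp f g h n t m s
  simp only [VpPart, wSum2J_eq_wSum1J_swap]
  linarith

theorem VpPart_le_Vp_add_Vp (hd : ∀ u v w : M, dist (u + w) (v + w) = dist u v) (hp : 0 ≤ p)
    (hf : MemWBV p f) (hg : MemWBV p g) (hnt : IsPartition n t) (hms : IsPartition m s) :
    VpPart p f g n t m s ≤ Vp p f + Vp p g := by
  have h₁ := normW_wSum1J_le hd hp f g n t
  have h₂ := normW_wSum1J_le hd hp (swap f) (swap g) m s
  have h₁₂ := normW_wSum12J_le hd hp f g n t m s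
  have hf₁ := le_csSup hf.1 ⟨n, t, hnt, rfl⟩
  have hf₂ : normW p (wSum1 p (swap f) m s) ≤ sSup (wSet2 p f) :=
    le_csSup hf.2.1 ⟨m, s, hms, rfl⟩
  have hf₁₂ := le_csSup hf.2.2 ⟨n, t, m, s, hnt, hms, rfl⟩
  have hg₁ := le_csSup hg.1 ⟨n, t, hnt, rfl⟩
  have hg₂ : normW p (wSum1 p (swap g) m s) ≤ sSup (wSet2 p g) :=
    le_csSup hg.2.1 ⟨m, s, hms, rfl⟩
  have hg₁₂ := le_csSup hg.2.2 ⟨n, t, m, s, hnt, hms, rfl⟩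
  simp only [VpPart, Vp, wSum2J_eq_wSum1J_swap]
  linarith

theorem wSetJ_nonempty (p : ℝ) (f g : ℝ → ℝ → M) : (wSetJ p f g).Nonempty :=
  ⟨_, 1, _, 1, _, isPartition_one, isPartition_one, rfl⟩

theorem VpPart_le_VpJ (hB : BddAbove (wSetJ p f g)) (hnt : IsPartition n t)
    (hms : IsPartition m s) : VpPart p f g n t m s ≤ VpJ p f g :=
  le_csSup hB ⟨n, t, m, s, hnt, hms, rfl⟩

theorem VpJ_le {c : ℝ}
    (h : ∀ n t m s, IsPartition n t → IsPartition m s → VpPart p f g n t m s ≤ c) :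
    VpJ p f g ≤ c :=
  csSup_le (wSetJ_nonempty p f g) fun _ ⟨n, t, m, s, hnt, hms, hx⟩ => hx ▸ h n t m s hnt hms

theorem VpJ_nonneg (p : ℝ) (f g : ℝ → ℝ → M) : 0 ≤ VpJ p f g :=
  Real.sSup_nonneg fun _ ⟨n, t, m, s, _, _, hx⟩ => hx ▸ VpPart_nonneg p f g n t m s

theorem VpJ_comm (f g : ℝ → ℝ → M) : VpJ p f g = VpJ p g f := by
  simp only [VpJ, wSetJ, VpPart_comm f g]

theorem bddAbove_wSetJ (hd : ∀ u v w : M, dist (u + w) (v + w) = dist u v) (hp : 0 ≤ p)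
    (hf : MemWBV p f) (hg : MemWBV p g) : BddAbove (wSetJ p f g) :=
  ⟨Vp p f + Vp p g, fun _ ⟨_, _, _, _, hnt, hms, hx⟩ =>
    hx ▸ VpPart_le_Vp_add_Vp hd hp hf hg hnt hms⟩

theorem VpJ_triangle (hd : ∀ u v w : M, dist (u + w) (v + w) = dist u v) (hp : 0 ≤ p)
    (hfh : BddAbove (wSetJ p f h)) (hhg : BddAbove (wSetJ p h g)) :
    VpJ p f g ≤ VpJ p f h + VpJ p h g :=
  VpJ_le fun _ _ _ _ hnt hms => (VpPart_triangle hd hp f h g _ _ _ _).trans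
    (add_le_add (VpPart_le_VpJ hfh hnt hms) (VpPart_le_VpJ hhg hnt hms))

theorem normW_wSum1J_le_VpJ (hB : BddAbove (wSetJ p f g)) (hnt : IsPartition n t) :
    normW p (wSum1J p f g n t) ≤ VpJ p f g := by
  have := VpPart_le_VpJ hB hnt hnt
  have := normW_nonneg (p := p) (wSum1J_nonneg p (swap f) (swap g) n t)
  have := normW_nonneg (p := p) (wSum12J_nonneg p f g n t n t)
  simp only [VpPart, wSum2J_eq_wSum1J_swap] at *
  linarith

theorem normW_wSum2J_le_VpJ (hB : BddAbove (wSetJ p f g)) (hms : IsPartition m s) :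
    normW p (wSum2J p f g m s) ≤ VpJ p f g := by
  have := VpPart_le_VpJ hB hms hms
  have := normW_nonneg (p := p) (wSum1J_nonneg p f g m s)
  have := normW_nonneg (p := p) (wSum12J_nonneg p f g m s m s)
  unfold VpPart at *
  linarith

theorem normW_wSum12J_le_VpJ (hB : BddAbove (wSetJ p f g)) (hnt : IsPartition n t)
    (hms : IsPartition m s) : normW p (wSum12J p f g n t m s) ≤ VpJ p f g := by
  have := VpPart_le_VpJ hB hnt hms
  have := normW_nonneg (p := p) (wSum1J_nonneg p f g n t)
  have := normW_nonneg (p := p) (wSum1J_nonneg p (swap f) (swap g) m s)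
  simp only [VpPart, wSum2J_eq_wSum1J_swap] at *
  linarith

theorem memWBV_of_bddAbove_wSetJ (hd : ∀ u v w : M, dist (u + w) (v + w) = dist u v)
    (hp : 0 ≤ p) (hg : MemWBV p g) (hB : BddAbove (wSetJ p f g)) : MemWBV p f := by
  refine ⟨⟨VpJ p f g + sSup (wSet1 p g), ?_⟩, ⟨VpJ p f g + sSup (wSet2 p g), ?_⟩,
    ⟨VpJ p f g + sSup (wSet12 p g), ?_⟩⟩
  · rintro _ ⟨n, t, hnt, rfl⟩
    exact (normW_wSum1_le hd hp f g n t).trans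
      (add_le_add (normW_wSum1J_le_VpJ hB hnt) (le_csSup hg.1 ⟨n, t, hnt, rfl⟩))
  · rintro _ ⟨m, s, hms, rfl⟩
    exact (normW_wSum1_le hd hp (swap f) (swap g) m s).trans
      (add_le_add (normW_wSum2J_le_VpJ hB hms) (le_csSup hg.2.1 ⟨m, s, hms, rfl⟩))
  · rintro _ ⟨n, t, m, s, hnt, hms, rfl⟩
    exact (normW_wSum12_le hd hp f g n t m s).trans
      (add_le_add (normW_wSum12J_le_VpJ hB hnt hms) (le_csSup hg.2.2 ⟨n, t, m, s, hnt, hms, rfl⟩))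

end JointVariationSup

section Increments

variable {p : ℝ} {f g : ℝ → ℝ → M} {n m : ℕ} {t s : ℕ → ℝ}

theorem rpow_jointDist_le_wSum1J (f g : ℝ → ℝ → M) (hnt : IsPartition n t) :
    jointDist (f (t 1) 0) (f (t 0) 0) (g (t 1) 0) (g (t 0) 0) ^ p ≤ wSum1J p f g n t :=
  single_le_sum (f := fun i => jointDist (f (t (i + 1)) 0) (f (t i) 0) (g (t (i + 1)) 0)
    (g (t i) 0) ^ p) (fun _ _ => Real.rpow_nonneg dist_nonneg _) (mem_range.2 hnt.1)

theorem rpow_jointDist_le_wSum12J (f g : ℝ → ℝ → M) (hnt : IsPartition n t)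
    (hms : IsPartition m s) :
    jointDist (f (t 1) (s 1) + f (t 0) (s 0)) (f (t 1) (s 0) + f (t 0) (s 1))
      (g (t 1) (s 1) + g (t 0) (s 0)) (g (t 1) (s 0) + g (t 0) (s 1)) ^ p ≤
      wSum12J p f g n t m s := by
  rw [wSum12J_eq_sum_jointDist]
  have hT : ∀ j i, 0 ≤ jointDist (f (t (i + 1)) (s (j + 1)) + f (t i) (s j))
      (f (t (i + 1)) (s j) + f (t i) (s (j + 1))) (g (t (i + 1)) (s (j + 1)) + g (t i) (s j))
      (g (t (i + 1)) (s j) + g (t i) (s (j + 1))) ^ p := fun _ _ => Real.rpow_nonneg dist_nonneg _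
  exact (single_le_sum (fun i _ => hT 0 i) (mem_range.2 hnt.1)).trans
    (single_le_sum (fun j _ => sum_nonneg fun i _ => hT j i) (mem_range.2 hms.1))

theorem jointDist_margin1_le (hp : 0 < p) (hB : BddAbove (wSetJ p f g)) {a : ℝ}
    (ha : a ∈ Set.Icc (0 : ℝ) 1) :
    jointDist (f a 0) (f 0 0) (g a 0) (g 0 0) ≤ maxIncr p (VpJ p f g) := by
  rcases ha.1.eq_or_lt with rfl | ha₀
  · exact (dist_self _).trans_le (maxIncr_nonneg (VpJ_nonneg p f g))
  obtain ⟨n, t, hnt, ht⟩ := exists_isPartition_one_eq ha₀ ha.2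
  have hterm := rpow_jointDist_le_wSum1J (p := p) f g hnt
  rw [ht, hnt.2.1] at hterm
  exact le_maxIncr hp dist_nonneg ((normW_mono (Real.rpow_nonneg dist_nonneg _) hterm).trans
    (normW_wSum1J_le_VpJ hB hnt))

theorem jointDist_margin2_le (hp : 0 < p) (hB : BddAbove (wSetJ p f g)) {b : ℝ}
    (hb : b ∈ Set.Icc (0 : ℝ) 1) :
    jointDist (f 0 b) (f 0 0) (g 0 b) (g 0 0) ≤ maxIncr p (VpJ p f g) := by
  rcases hb.1.eq_or_lt with rfl | hb₀
  · exact (dist_self _).trans_le (maxIncr_nonneg (VpJ_nonneg p f g))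
  obtain ⟨m, s, hms, hs⟩ := exists_isPartition_one_eq hb₀ hb.2
  have hterm := rpow_jointDist_le_wSum1J (p := p) (swap f) (swap g) hms
  rw [hs, hms.2.1] at hterm
  exact le_maxIncr hp dist_nonneg ((normW_mono (Real.rpow_nonneg dist_nonneg _) hterm).trans
    (normW_wSum2J_le_VpJ hB hms))

theorem jointDist_corner_le (hp : 0 < p) (hB : BddAbove (wSetJ p f g)) {a b : ℝ}
    (ha : a ∈ Set.Icc (0 : ℝ) 1) (hb : b ∈ Set.Icc (0 : ℝ) 1) :
    jointDist (f a b + f 0 0) (f a 0 + f 0 b) (g a b + g 0 0) (g a 0 + g 0 b) ≤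
      maxIncr p (VpJ p f g) := by
  rcases ha.1.eq_or_lt with rfl | ha₀
  · rw [add_comm (f 0 b), add_comm (g 0 b)]
    exact (dist_self _).trans_le (maxIncr_nonneg (VpJ_nonneg p f g))
  rcases hb.1.eq_or_lt with rfl | hb₀
  · exact (dist_self _).trans_le (maxIncr_nonneg (VpJ_nonneg p f g))
  obtain ⟨n, t, hnt, ht⟩ := exists_isPartition_one_eq ha₀ ha.2
  obtain ⟨m, s, hms, hs⟩ := exists_isPartition_one_eq hb₀ hb.2
  have hterm := rpow_jointDist_le_wSum12J (p := p) f g hnt hms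
  rw [ht, hs, hnt.2.1, hms.2.1] at hterm
  exact le_maxIncr hp dist_nonneg ((normW_mono (Real.rpow_nonneg dist_nonneg _) hterm).trans
    (normW_wSum12J_le_VpJ hB hnt hms))

theorem dist_apply_le_rhoP (hd : ∀ u v w : M, dist (u + w) (v + w) = dist u v) (hp : 0 < p)
    (hB : BddAbove (wSetJ p f g)) {a b : ℝ} (ha : a ∈ Set.Icc (0 : ℝ) 1)
    (hb : b ∈ Set.Icc (0 : ℝ) 1) :
    dist (f a b) (g a b) ≤ 3 * rhoP p f g + 3 * maxIncr p (rhoP p f g) := by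
  have hV : maxIncr p (VpJ p f g) ≤ maxIncr p (rhoP p f g) :=
    maxIncr_mono hp (VpJ_nonneg p f g) (le_add_of_nonneg_left dist_nonneg)
  have h₀ : dist (f 0 0) (g 0 0) ≤ rhoP p f g := le_add_of_nonneg_right (VpJ_nonneg p f g)
  have h₁ : dist (f a 0) (g a 0) ≤
      jointDist (f a 0) (f 0 0) (g a 0) (g 0 0) + dist (f 0 0) (g 0 0) := by
    rw [jointDist_transpose]
    exact dist_le_jointDist_add hd _ _ _ _
  have h₂ : dist (f 0 b) (g 0 b) ≤
      jointDist (f 0 b) (f 0 0) (g 0 b) (g 0 0) + dist (f 0 0) (g 0 0) := by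
    rw [jointDist_transpose]
    exact dist_le_jointDist_add hd _ _ _ _
  have h₁₂ : dist (f a b) (g a b) ≤
      jointDist (f a b + f 0 0) (f a 0 + f 0 b) (g a b + g 0 0) (g a 0 + g 0 b) +
        (dist (f a 0) (g a 0) + dist (f 0 b) (g 0 b)) + dist (f 0 0) (g 0 0) :=
    calc dist (f a b) (g a b)
        ≤ dist (f a b + f 0 0) (g a b + g 0 0) + dist (f 0 0) (g 0 0) := by
          rw [dist_comm (f 0 0)]
          exact dist_le_jointDist_add hd _ _ (g 0 0) (f 0 0)
      _ ≤ jointDist (f a b + f 0 0) (f a 0 + f 0 b) (g a b + g 0 0) (g a 0 + g 0 b) +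
            dist (f a 0 + f 0 b) (g a 0 + g 0 b) + dist (f 0 0) (g 0 0) := by
          rw [jointDist_transpose]
          gcongr
          exact dist_le_jointDist_add hd _ _ _ _
      _ ≤ _ := by
          gcongr
          exact dist_add_add_le_of_invariant hd _ _ _ _
  linarith [jointDist_margin1_le hp hB ha, jointDist_margin2_le hp hB hb,
    jointDist_corner_le hp hB ha hb]

end Increments

section Limits

variable {p : ℝ} {f g : ℝ → ℝ → M} {n m : ℕ} {t s : ℕ → ℝ}

theorem Filter.Tendsto.normW {α : Type*} {l : Filter α} {S : α → ℝ} {x : ℝ}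
    (h : Tendsto S l (𝓝 x)) (p : ℝ) : Tendsto (fun v => normW p (S v)) l (𝓝 (normW p x)) :=
  ((continuous_normW p).tendsto x).comp h

theorem tendsto_VpPart [ContinuousAdd M] (hp : 0 ≤ p) {F : ℕ → ℝ → ℝ → M}
    (hlim : ∀ a ∈ Set.Icc (0 : ℝ) 1, ∀ b ∈ Set.Icc (0 : ℝ) 1,
      Tendsto (fun v => F v a b) atTop (𝓝 (f a b)))
    (hnt : IsPartition n t) (hms : IsPartition m s) (g : ℝ → ℝ → M) :
    Tendsto (fun v => VpPart p (F v) g n t m s) atTop (𝓝 (VpPart p f g n t m s)) := by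
  have h₀ : (0 : ℝ) ∈ Set.Icc (0 : ℝ) 1 := ⟨le_rfl, zero_le_one⟩
  have hT : ∀ i ≤ n, ∀ j ≤ m, Tendsto (fun v => F v (t i) (s j)) atTop (𝓝 (f (t i) (s j))) :=
    fun i hi j hj => hlim _ (hnt.mem_Icc hi) _ (hms.mem_Icc hj)
  unfold VpPart wSum1J wSum2J wSum12J
  refine (((tendsto_finsetSum _ fun i hi => ?_).normW p).add
    ((tendsto_finsetSum _ fun j hj => ?_).normW p)).add
    ((tendsto_finsetSum _ fun j hj => tendsto_finsetSum _ fun i hi => ?_).normW p)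
  · rw [mem_range] at hi
    exact (((hlim _ (hnt.mem_Icc hi) _ h₀).add tendsto_const_nhds).dist
      ((hlim _ (hnt.mem_Icc hi.le) _ h₀).add tendsto_const_nhds)).rpow_const (Or.inr hp)
  · rw [mem_range] at hj
    exact (((hlim _ h₀ _ (hms.mem_Icc hj)).add tendsto_const_nhds).dist
      ((hlim _ h₀ _ (hms.mem_Icc hj.le)).add tendsto_const_nhds)).rpow_const (Or.inr hp)
  · rw [mem_range] at hi hj
    exact (((((hT _ hi _ hj).add (hT _ hi.le _ hj.le)).add tendsto_const_nhds).add
      tendsto_const_nhds).dist ((tendsto_const_nhds.add (hT _ hi _ hj.le)).add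
        (hT _ hi.le _ hj))).rpow_const (Or.inr hp)

theorem VpPart_congr_left [ContinuousAdd M] (hp : 0 ≤ p) {f' : ℝ → ℝ → M}
    (h : ∀ a ∈ Set.Icc (0 : ℝ) 1, ∀ b ∈ Set.Icc (0 : ℝ) 1, f a b = f' a b)
    (hnt : IsPartition n t) (hms : IsPartition m s) (g : ℝ → ℝ → M) :
    VpPart p f g n t m s = VpPart p f' g n t m s :=
  -- the constant sequence `f` converges to `f'` pointwise on the square
  tendsto_nhds_unique tendsto_const_nhds (tendsto_VpPart hp (F := fun _ => f)
    (fun a ha b hb => h a ha b hb ▸ tendsto_const_nhds) hnt hms g)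

theorem dist_add_VpPart_le_of_tendsto [ContinuousAdd M] (hp : 0 ≤ p) {F : ℕ → ℝ → ℝ → M}
    (hlim : ∀ a ∈ Set.Icc (0 : ℝ) 1, ∀ b ∈ Set.Icc (0 : ℝ) 1,
      Tendsto (fun v => F v a b) atTop (𝓝 (f a b)))
    {ε : ℝ} (hB : ∀ v, BddAbove (wSetJ p (F v) g)) (hε : ∀ᶠ v in atTop, rhoP p (F v) g ≤ ε)
    (hnt : IsPartition n t) (hms : IsPartition m s) :
    dist (f 0 0) (g 0 0) + VpPart p f g n t m s ≤ ε := by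
  have h₀ : (0 : ℝ) ∈ Set.Icc (0 : ℝ) 1 := ⟨le_rfl, zero_le_one⟩
  exact le_of_tendsto (((hlim 0 h₀ 0 h₀).dist tendsto_const_nhds).add
    (tendsto_VpPart hp hlim hnt hms g))
    (hε.mono fun v hv => (add_le_add le_rfl (VpPart_le_VpJ (hB v) hnt hms)).trans hv)

end Limits

section Metric

variable {p : ℝ} {f g h : ℝ → ℝ → M}

theorem rhoP_nonneg (p : ℝ) (f g : ℝ → ℝ → M) : 0 ≤ rhoP p f g :=
  add_nonneg dist_nonneg (VpJ_nonneg p f g)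

theorem rhoP_comm (f g : ℝ → ℝ → M) : rhoP p f g = rhoP p g f := by
  rw [rhoP, rhoP, dist_comm, VpJ_comm]

theorem rhoP_triangle (hd : ∀ u v w : M, dist (u + w) (v + w) = dist u v) (hp : 0 ≤ p)
    (hf : MemWBV p f) (hg : MemWBV p g) (hh : MemWBV p h) :
    rhoP p f g ≤ rhoP p f h + rhoP p h g := by
  have hV := VpJ_triangle hd hp (bddAbove_wSetJ hd hp hf hh) (bddAbove_wSetJ hd hp hh hg)
  have hdist := dist_triangle (f 0 0) (h 0 0) (g 0 0)
  unfold rhoP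
  linarith

theorem rhoP_le_of_forall {ε : ℝ}
    (h : ∀ n t m s, IsPartition n t → IsPartition m s →
      dist (f 0 0) (g 0 0) + VpPart p f g n t m s ≤ ε) :
    rhoP p f g ≤ ε := by
  have := VpJ_le (c := ε - dist (f 0 0) (g 0 0)) fun n t m s hnt hms => by
    linarith [h n t m s hnt hms]
  unfold rhoP
  linarith

theorem rhoP_eq_zero_iff (hd : ∀ u v w : M, dist (u + w) (v + w) = dist u v) (hp : 0 < p)
    (hf : MemWBV p f) (hg : MemWBV p g) :
    rhoP p f g = 0 ↔ ∀ a ∈ Set.Icc (0 : ℝ) 1, ∀ b ∈ Set.Icc (0 : ℝ) 1, f a b = g a b := by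
  have : ContinuousAdd M := continuousAdd_of_invariant hd
  constructor
  · intro h a ha b hb
    have := dist_apply_le_rhoP hd hp (bddAbove_wSetJ hd hp.le hf hg) ha hb
    rw [h, maxIncr_zero hp] at this
    exact dist_le_zero.1 (by linarith)
  · intro h
    have hV : VpJ p f g ≤ 0 := VpJ_le fun n t m s hnt hms =>
      ((VpPart_congr_left hp.le h hnt hms g).trans (VpPart_self hp g n t m s)).le
    have h₀ : (0 : ℝ) ∈ Set.Icc (0 : ℝ) 1 := ⟨le_rfl, zero_le_one⟩
    rw [rhoP, le_antisymm hV (VpJ_nonneg p f g), h 0 h₀ 0 h₀, dist_self, add_zero]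

end Metric

theorem exists_memWBV_tendsto_rhoP [CompleteSpace M]
    (hd : ∀ u v w : M, dist (u + w) (v + w) = dist u v) {p : ℝ} (hp : 0 < p)
    {F : ℕ → ℝ → ℝ → M} (hF : ∀ u, MemWBV p (F u))
    (hC : ∀ ε > (0 : ℝ), ∃ N, ∀ u ≥ N, ∀ v ≥ N, rhoP p (F u) (F v) < ε) :
    ∃ f : ℝ → ℝ → M, MemWBV p f ∧ Tendsto (fun u => rhoP p (F u) f) atTop (𝓝 0) := by
  have : ContinuousAdd M := continuousAdd_of_invariant hd
  have : Nonempty M := ⟨F 0 0 0⟩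
  have hB : ∀ u v, BddAbove (wSetJ p (F u) (F v)) :=
    fun u v => bddAbove_wSetJ hd hp.le (hF u) (hF v)
  have hω : Tendsto (fun r => 3 * r + 3 * maxIncr p r) (𝓝 0) (𝓝 0) := by
    have := continuous_maxIncr hp
    have hcont : Continuous fun r => 3 * r + 3 * maxIncr p r := by fun_prop
    simpa [maxIncr_zero hp] using hcont.tendsto 0
  have hlim : ∀ a ∈ Set.Icc (0 : ℝ) 1, ∀ b ∈ Set.Icc (0 : ℝ) 1,
      Tendsto (fun u => F u a b) atTop (𝓝 (limUnder atTop fun u => F u a b)) :=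
    fun a ha b hb => (cauchySeq_of_dist_le_of_tendsto hω (fun u v => rhoP_nonneg p _ _) hC
      fun u v => dist_apply_le_rhoP hd hp (hB u v) ha hb).tendsto_limUnder
  set f : ℝ → ℝ → M := fun a b => limUnder atTop fun u => F u a b
  have hclose : ∀ ε > 0, ∃ N, ∀ u ≥ N, ∀ n t m s, IsPartition n t → IsPartition m s →
      dist (f 0 0) (F u 0 0) + VpPart p f (F u) n t m s ≤ ε := by
    intro ε hε
    obtain ⟨N, hN⟩ := hC ε hε
    exact ⟨N, fun u hu n t m s hnt hms => dist_add_VpPart_le_of_tendsto hp.le hlim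
      (fun v => hB v u) (eventually_atTop.2 ⟨N, fun v hv => (hN v hv u hu).le⟩) hnt hms⟩
  obtain ⟨N, hN⟩ := hclose 1 one_pos
  have hf : MemWBV p f := memWBV_of_bddAbove_wSetJ hd hp.le (hF N)
    ⟨1, fun _ ⟨n, t, m, s, hnt, hms, hx⟩ =>
      hx ▸ (le_add_of_nonneg_left dist_nonneg).trans (hN N le_rfl n t m s hnt hms)⟩
  refine ⟨f, hf, Metric.tendsto_atTop.2 fun ε hε => ?_⟩
  obtain ⟨N, hN⟩ := hclose (ε / 2) (half_pos hε)
  refine ⟨N, fun u hu => ?_⟩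
  rw [Real.dist_0_eq_abs, abs_of_nonneg (rhoP_nonneg p _ _), rhoP_comm]
  exact (rhoP_le_of_forall (hN u hu)).trans_lt (half_lt_self hε)

/-- For `p ∈ (0,∞)` and a complete metric semigroup `M`, the bivariate Wiener
bounded `p`-variation space `(WBV_p(I×I, M), ρ_p)` is a complete metric space:
`ρ_p` vanishes exactly on equal functions (on `I×I`), is symmetric, satisfies the
triangle inequality, and every `ρ_p`-Cauchy sequence converges in the space. -/
theorem WBVp_complete_metric [CompleteSpace M] (p : ℝ) (hp : 0 < p)
    (hd : ∀ u v w : M, dist (u + w) (v + w) = dist u v) :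
    (∀ f g : ℝ → ℝ → M, MemWBV p f → MemWBV p g →
      (rhoP p f g = 0 ↔ ∀ t ∈ Set.Icc (0:ℝ) 1, ∀ s ∈ Set.Icc (0:ℝ) 1, f t s = g t s))
    ∧ (∀ f g : ℝ → ℝ → M, MemWBV p f → MemWBV p g → rhoP p f g = rhoP p g f)
    ∧ (∀ f g h : ℝ → ℝ → M, MemWBV p f → MemWBV p g → MemWBV p h →
        rhoP p f g ≤ rhoP p f h + rhoP p h g)
    ∧ (∀ F : ℕ → ℝ → ℝ → M, (∀ u, MemWBV p (F u)) →
        (∀ ε > (0:ℝ), ∃ N, ∀ u ≥ N, ∀ v ≥ N, rhoP p (F u) (F v) < ε) →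
        ∃ f : ℝ → ℝ → M, MemWBV p f ∧
          Filter.Tendsto (fun u => rhoP p (F u) f) Filter.atTop (nhds 0)) :=
  ⟨fun _ _ hf hg => rhoP_eq_zero_iff hd hp hf hg, fun f g _ _ => rhoP_comm f g,
    fun _ _ _ hf hg hh => rhoP_triangle hd hp.le hf hg hh,
    fun _ hF hC => exists_memWBV_tendsto_rhoP hd hp hF hC⟩
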